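/- arXiv:1412.5153 — 4 statements merged into one kernel-verified Lean document; each statement's English description precedes it below -/
import Mathlib

section
/- Let X be a finite nonempty set of points in the plane, let p be a point of X whose second coordinate is maximal in X (a topmost point), let q be a point of X whose second coordinate is minimal in X (a bottommost point), and let λ be the maximum over r ∈ X of the area of the triangle with vertices p, q, r (i.e. the planar Lebesgue measure of the convex hull of {p, q, r}). Then λ ≤ area(convexHull X) ≤ 4λ, where area(convexHull X) is the planar Lebesgue measure of the convex hull of X. -/
/-!
Put `u = p - q` and let `h` be the maximum of `|cross u (r - q)|` over `r ∈ X`, attained at `r`.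
The conditions `q 1 ≤ x 1 ≤ p 1` and `|cross u (x - q)| ≤ h` cut out a parallelogram of area `2 h`;
it is convex and contains `X`, hence the hull of `X`. On the other hand, the parallelogram spanned
by `p - q` and `r - q` has area `h` and is covered by the triangle `p q r` together with its point
reflection through the midpoint of `p r`, so `h` is at most twice the area of that triangle.
-/

open MeasureTheory Set Pointwise

local notation "ℝ²" => EuclideanSpace ℝ (Fin 2)

section Triangle

variable {E : Type*} [AddCommGroup E] [Module ℝ E]

theorem add_smul_sub_add_smul_sub_mem_convexHull (p q r : E) {s t : ℝ} (hs : 0 ≤ s)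
    (ht : 0 ≤ t) (hst : s + t ≤ 1) : q + s • (p - q) + t • (r - q) ∈ convexHull ℝ {p, q, r} := by
  have hmem := (convex_convexHull ℝ ({p, q, r} : Set E)).sum_mem (t := Finset.univ)
    (w := ![s, 1 - s - t, t]) (z := ![p, q, r])
    (by simp [Fin.forall_fin_succ, hs, ht, sub_nonneg]; linarith)
    (by simp [Fin.sum_univ_three]; ring)
    (by simp [Fin.forall_fin_succ, subset_convexHull ℝ _ _])
  convert hmem using 1
  simp only [Fin.sum_univ_three, Matrix.cons_val]
  module

theorem vadd_parallelepiped_subset_convexHull_union (p q r : E) :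
    q +ᵥ parallelepiped ![p - q, r - q] ⊆
      convexHull ℝ {p, q, r} ∪ ((p + r) +ᵥ -convexHull ℝ {p, q, r}) := by
  rintro _ ⟨x, hx, rfl⟩
  obtain ⟨t, ⟨ht0, ht1⟩, rfl⟩ := (mem_parallelepiped_iff _ _).1 hx
  obtain ⟨h0, h0'⟩ : 0 ≤ t 0 ∧ t 0 ≤ 1 := ⟨ht0 0, ht1 0⟩
  obtain ⟨h1, h1'⟩ : 0 ≤ t 1 ∧ t 1 ≤ 1 := ⟨ht0 1, ht1 1⟩
  simp only [Fin.sum_univ_two, Matrix.cons_val, vadd_eq_add]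
  rcases le_total (t 0 + t 1) 1 with hle | hge
  · left
    simpa [add_assoc] using add_smul_sub_add_smul_sub_mem_convexHull p q r h0 h1 hle
  · right
    refine ⟨-(q + (1 - t 0) • (p - q) + (1 - t 1) • (r - q)), neg_mem_neg.2 ?_, ?_⟩
    · exact add_smul_sub_add_smul_sub_mem_convexHull p q r (by linarith) (by linarith)
        (by linarith)
    · simp only [vadd_eq_add]
      module

theorem measure_vadd_parallelepiped_le_two_mul_convexHull [MeasurableSpace E] [MeasurableAdd E]
    [MeasurableNeg E] (μ : Measure E) [μ.IsAddLeftInvariant] [μ.IsNegInvariant] (p q r : E) :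
    μ (q +ᵥ parallelepiped ![p - q, r - q]) ≤ 2 * μ (convexHull ℝ {p, q, r}) :=
  calc μ (q +ᵥ parallelepiped ![p - q, r - q])
      ≤ μ (convexHull ℝ {p, q, r} ∪ ((p + r) +ᵥ -convexHull ℝ {p, q, r})) :=
        measure_mono (vadd_parallelepiped_subset_convexHull_union p q r)
    _ ≤ μ (convexHull ℝ {p, q, r}) + μ ((p + r) +ᵥ -convexHull ℝ {p, q, r}) :=
        measure_union_le _ _
    _ = 2 * μ (convexHull ℝ {p, q, r}) := by
        rw [measure_vadd, Measure.measure_neg, two_mul]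

end Triangle

def cross (a b : ℝ²) : ℝ := a 0 * b 1 - a 1 * b 0

theorem volume_parallelepiped_fin_two (a b : ℝ²) :
    volume (parallelepiped ![a, b]) = ENNReal.ofReal |cross a b| := by
  rw [← (EuclideanSpace.basisFun (Fin 2) ℝ).addHaar_eq_volume, Measure.addHaar_parallelepiped,
    Module.Basis.det_apply, Matrix.det_fin_two]
  simp [cross, Module.Basis.toMatrix_apply, mul_comm]

theorem ofReal_abs_cross_le_two_mul_volume_convexHull (p q r : ℝ²) :
    ENNReal.ofReal |cross (p - q) (r - q)| ≤ 2 * volume (convexHull ℝ {p, q, r}) := by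
  rw [← volume_parallelepiped_fin_two, ← measure_vadd volume q]
  exact measure_vadd_parallelepiped_le_two_mul_convexHull volume p q r

theorem volume_setOf_fin_two (s t : Set ℝ) :
    volume {x : ℝ² | x 0 ∈ s ∧ x 1 ∈ t} = volume s * volume t := by
  have hpi : {x : ℝ² | x 0 ∈ s ∧ x 1 ∈ t} =
      (MeasurableEquiv.toLp 2 (Fin 2 → ℝ)).symm ⁻¹' univ.pi ![s, t] := by
    ext x
    simp [Fin.forall_fin_two]
  rw [hpi, (EuclideanSpace.volume_preserving_symm_measurableEquiv_toLp _).measure_preimage_equiv,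
    volume_pi_pi]
  simp

theorem convex_setOf_fin_two {s t : Set ℝ} (hs : Convex ℝ s) (ht : Convex ℝ t) :
    Convex ℝ {x : ℝ² | x 0 ∈ s ∧ x 1 ∈ t} :=
  (hs.linear_preimage (EuclideanSpace.proj 0 : ℝ² →L[ℝ] ℝ).toLinearMap).inter
    (ht.linear_preimage (EuclideanSpace.proj 1 : ℝ² →L[ℝ] ℝ).toLinearMap)

theorem volume_convexHull_eq_zero_of_forall_eq {X : Set ℝ²} {c : ℝ}
    (hX : ∀ x ∈ X, x 1 = c) : volume (convexHull ℝ X) = 0 := by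
  refine measure_mono_null (t := {x | x 0 ∈ univ ∧ x 1 ∈ ({c} : Set ℝ)}) ?_ ?_
  · exact convexHull_min (fun x hx => ⟨mem_univ _, hX x hx⟩)
      (convex_setOf_fin_two convex_univ (convex_singleton c))
  · rw [volume_setOf_fin_two, Real.volume_singleton, mul_zero]

theorem volume_convexHull_le_of_abs_cross_le {X : Set ℝ²} {p q : ℝ²} {h : ℝ}
    (hstrip : ∀ x ∈ X, x 1 ∈ Icc (q 1) (p 1))
    (hcross : ∀ x ∈ X, |cross (p - q) (x - q)| ≤ h) :
    volume (convexHull ℝ X) ≤ ENNReal.ofReal (2 * h) := by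
  rcases le_or_gt (p 1) (q 1) with hpq | hpq
  · rw [volume_convexHull_eq_zero_of_forall_eq (c := q 1)
      fun x hx => le_antisymm ((hstrip x hx).2.trans hpq) (hstrip x hx).1]
    exact zero_le
  set u := p - q
  set A := Matrix.toEuclideanLin !![-u 1, u 0; 0, 1]
  have hA0 (y : ℝ²) : A y 0 = cross u y := by
    simp [A, cross, Matrix.mulVec, dotProduct, Fin.sum_univ_two]; ring
  have hA1 (y : ℝ²) : A y 1 = y 1 := by simp [A, Matrix.mulVec, dotProduct, Fin.sum_univ_two]
  have hdetA : LinearMap.det A = -(p 1 - q 1) := by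
    simp [A, u, Matrix.toEuclideanLin_eq_toLin_orthonormal, LinearMap.det_toLin,
      Matrix.det_fin_two]
  set box : Set ℝ² :=
    {y | y 0 ∈ Icc (cross u q - h) (cross u q + h) ∧ y 1 ∈ Icc (q 1) (p 1)}
  have hX : convexHull ℝ X ⊆ A ⁻¹' box := by
    refine convexHull_min (fun x hx => ?_)
      ((convex_setOf_fin_two (convex_Icc _ _) (convex_Icc _ _)).linear_preimage A)
    have hsub : cross u (x - q) = cross u x - cross u q := by simp [cross]; ring
    have hbound := abs_le.1 (hcross x hx)
    simp only [box, mem_preimage, mem_ofPred_eq, hA0, hA1, mem_Icc]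
    exact ⟨⟨by linarith, by linarith⟩, hstrip x hx⟩
  have hvol_box : volume box = ENNReal.ofReal (2 * h * (p 1 - q 1)) := by
    rw [volume_setOf_fin_two, Real.volume_Icc, Real.volume_Icc,
      ← ENNReal.ofReal_mul' (by linarith)]
    congr 1
    ring
  calc volume (convexHull ℝ X) ≤ volume (A ⁻¹' box) := measure_mono hX
    _ = ENNReal.ofReal (2 * h) := by
      rw [Measure.addHaar_preimage_linearMap _ (by rw [hdetA]; linarith), hvol_box, hdetA,
        ← ENNReal.ofReal_mul (abs_nonneg _), abs_inv, abs_neg, abs_of_pos (by linarith)]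
      field_simp [(sub_pos.2 hpq).ne']

/-- For a finite nonempty planar point set `X` with topmost point `p` and bottommost
point `q`, the maximum area `λ` of a triangle `p q r` with `r ∈ X` satisfies
`λ ≤ area(convexHull X) ≤ 4 λ`. -/
theorem max_triangle_area_approximates_hull_area
    (X : Finset (EuclideanSpace ℝ (Fin 2))) (hX : X.Nonempty)
    (p q : EuclideanSpace ℝ (Fin 2)) (hp : p ∈ X) (hq : q ∈ X)
    (hptop : ∀ x ∈ X, x 1 ≤ p 1) (hqbot : ∀ x ∈ X, q 1 ≤ x 1) :
    (⨆ r ∈ X, volume (convexHull ℝ ({p, q, r} : Set (EuclideanSpace ℝ (Fin 2))))) ≤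
        volume (convexHull ℝ (X : Set (EuclideanSpace ℝ (Fin 2)))) ∧
      volume (convexHull ℝ (X : Set (EuclideanSpace ℝ (Fin 2)))) ≤
        4 * ⨆ r ∈ X, volume (convexHull ℝ ({p, q, r} : Set (EuclideanSpace ℝ (Fin 2)))) := by
  refine ⟨iSup₂_le fun r hr => measure_mono (convexHull_mono ?_), ?_⟩
  · simp [insert_subset_iff, hp, hq, hr]
  obtain ⟨r, hr, hrmax⟩ := X.exists_max_image (fun r => |cross (p - q) (r - q)|) hX
  calc volume (convexHull ℝ (X : Set (EuclideanSpace ℝ (Fin 2))))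
      ≤ ENNReal.ofReal (2 * |cross (p - q) (r - q)|) :=
        volume_convexHull_le_of_abs_cross_le (fun x hx => ⟨hqbot x hx, hptop x hx⟩) hrmax
    _ = 2 * ENNReal.ofReal |cross (p - q) (r - q)| := by
        rw [ENNReal.ofReal_mul zero_le_two, ENNReal.ofReal_ofNat]
    _ ≤ 2 * (2 * volume (convexHull ℝ {p, q, r})) := by
        gcongr
        exact ofReal_abs_cross_le_two_mul_volume_convexHull p q r
    _ ≤ 4 * ⨆ r ∈ X, volume (convexHull ℝ ({p, q, r} : Set ℝ²)) := by
        rw [← mul_assoc, two_mul 2, two_add_two_eq_four]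
        gcongr
        exact le_iSup₂ (f := fun r (_ : r ∈ X) => volume (convexHull ℝ {p, q, r})) r hr
end

section
/- Let n be a natural number, a : Fin n → ℕ, and let t, k be natural numbers with t ≤ ∑_{i} a i. Set M = 1 + ∑_{i} a i. Then for every subset J of Fin n (a Finset), ∑_{i ∈ J} (a i + M) = t + k·M holds if and only if J.card = k and ∑_{i ∈ J} a i = t. -/
/-- Padding transformation for `#SubsetSum`: adding `M = 1 + ∑ a i` to every `a i`
and `k • M` to the target `t` forces every solution to have cardinality exactly `k`. -/
theorem subsetSum_padding (n : ℕ) (a : Fin n → ℕ) (t k : ℕ) (ht : t ≤ ∑ i, a i)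
    (J : Finset (Fin n)) :
    (∑ i ∈ J, (a i + (1 + ∑ i, a i))) = t + k * (1 + ∑ i, a i) ↔
      J.card = k ∧ ∑ i ∈ J, a i = t := by
  set M := 1 + ∑ i, a i with hM
  have hsum : ∑ i ∈ J, (a i + M) = (∑ i ∈ J, a i) + J.card * M := by
    rw [Finset.sum_add_distrib, Finset.sum_const, smul_eq_mul]
  have hs : ∑ i ∈ J, a i < M := by
    have := Finset.sum_le_sum_of_subset (f := a) (Finset.subset_univ J)
    omega
  have ht' : t < M := by omega
  rw [hsum]
  constructor
  · intro h
    have hc : J.card = k := by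
      rcases lt_trichotomy J.card k with hlt | he | hgt
      · exfalso
        have h1 : (J.card + 1) * M ≤ k * M :=
          Nat.mul_le_mul_right M (Nat.succ_le_of_lt hlt)
        have h2 : (J.card + 1) * M = J.card * M + M := by ring
        omega
      · exact he
      · exfalso
        have h1 : (k + 1) * M ≤ J.card * M :=
          Nat.mul_le_mul_right M (Nat.succ_le_of_lt hgt)
        have h2 : (k + 1) * M = k * M + M := by ring
        omega
    exact ⟨hc, by rw [hc] at h; omega⟩
  · rintro ⟨h1, h2⟩; rw [h1, h2]
end

section
/- Let U > 0 and 0 < δ ≤ U be real numbers, and let S be a finite set of points contained in the square [0, U]² ⊂ ℝ². Let S̃ = {(δ·⌊x/δ⌋, δ·⌊y/δ⌋) : (x, y) ∈ S} be the set obtained by snapping each coordinate of each point down to an integer multiple of δ. Then |area(convexHull S) − area(convexHull S̃)| ≤ 4·δ·U, where area denotes the planar Lebesgue measure of the convex hull. -/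
/-!
Every point moves by a vector of `[0, δ)²` when snapped, so each of the two hulls lies in the
other one plus a square of side `δ`. Adding a horizontal segment of length `δ` to a convex body of
height at most `H` enlarges its area by at most `δ H`, since every horizontal slice is an interval
that grows by `δ` (Fubini); likewise for vertical segments. A square being the sum of a
horizontal and a vertical segment, the two areas differ by at most `δ U + δ (U + δ) ≤ 3 δ U`.
-/

open MeasureTheory Set Pointwise

lemma Convex.volume_add_Icc_le {s : Set ℝ} (hs : Convex ℝ s) (hb : Bornology.IsBounded s)
    (a b : ℝ) : volume (s + Icc a b) ≤ volume s + ENNReal.ofReal (b - a) := by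
  rcases s.eq_empty_or_nonempty with rfl | hne
  · simp
  calc volume (s + Icc a b) ≤ volume (Icc (sInf s + a) (sSup s + b)) :=
        measure_mono ((add_subset_add_right hb.subset_Icc_sInf_sSup).trans
          (Icc_add_Icc_subset _ _ _ _))
    _ = ENNReal.ofReal ((sSup s - sInf s) + (b - a)) := by rw [Real.volume_Icc]; ring_nf
    _ ≤ volume (Ioo (sInf s) (sSup s)) + ENNReal.ofReal (b - a) := by
        rw [Real.volume_Ioo]; exact ENNReal.ofReal_add_le
    _ ≤ volume s + ENNReal.ofReal (b - a) := by
        gcongr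
        exact (hs.isConnected hne).Ioo_csInf_csSup_subset hb.bddBelow hb.bddAbove

lemma Set.preimage_prodMk_add_zero_prod {α β : Type*} [AddZeroClass α] [Add β]
    (C : Set (α × β)) (I : Set β) (x : α) :
    Prod.mk x ⁻¹' (C + {0} ×ˢ I) = Prod.mk x ⁻¹' C + I := by
  ext y
  simp [mem_add]

lemma Convex.preimage_prodMk {𝕜 E F : Type*} [Ring 𝕜] [PartialOrder 𝕜] [AddCommGroup E]
    [Module 𝕜 E] [AddCommGroup F] [Module 𝕜 F] {C : Set (E × F)} (hC : Convex 𝕜 C) (x : E) :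
    Convex 𝕜 (Prod.mk x ⁻¹' C) :=
  hC.affine_preimage ((AffineMap.const 𝕜 F x).prod (AffineMap.id 𝕜 F))

section Plane

variable {C : Set (ℝ × ℝ)} {a b : ℝ}

lemma Convex.volume_add_zero_prod_Icc_le (hC : Convex ℝ C) (hK : IsCompact C) {l L : ℝ}
    (hab : a ≤ b) (hCl : ∀ p ∈ C, p.1 ∈ Icc l L) :
    volume (C + {0} ×ˢ Icc a b) ≤ volume C + ENNReal.ofReal ((b - a) * (L - l)) := by
  have hslice (x : ℝ) : volume (Prod.mk x ⁻¹' (C + {0} ×ˢ Icc a b)) ≤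
      volume (Prod.mk x ⁻¹' C) + (Icc l L).indicator (fun _ ↦ ENNReal.ofReal (b - a)) x := by
    rw [preimage_prodMk_add_zero_prod]
    rcases (Prod.mk x ⁻¹' C).eq_empty_or_nonempty with he | ⟨y, hy⟩
    · simp [he]
    rw [indicator_of_mem (hCl _ hy)]
    exact (hC.preimage_prodMk x).volume_add_Icc_le
      ((hK.image continuous_snd).isBounded.subset fun y hy ↦ ⟨_, hy, rfl⟩) a b
  calc volume (C + {0} ×ˢ Icc a b)
      = ∫⁻ x, volume (Prod.mk x ⁻¹' (C + {0} ×ˢ Icc a b)) := by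
        rw [Measure.volume_eq_prod,
          Measure.prod_apply (hK.add (isCompact_singleton.prod isCompact_Icc)).measurableSet]
    _ ≤ ∫⁻ x, (volume (Prod.mk x ⁻¹' C) +
          (Icc l L).indicator (fun _ ↦ ENNReal.ofReal (b - a)) x) := lintegral_mono hslice
    _ = volume C + ENNReal.ofReal ((b - a) * (L - l)) := by
        rw [lintegral_add_right _ (measurable_const.indicator measurableSet_Icc),
          ← Measure.prod_apply hK.measurableSet, ← Measure.volume_eq_prod,
          lintegral_indicator measurableSet_Icc, setLIntegral_const, Real.volume_Icc,
          ← ENNReal.ofReal_mul (sub_nonneg.2 hab)]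

lemma Convex.volume_add_Icc_prod_zero_le (hC : Convex ℝ C) (hK : IsCompact C) {m M : ℝ}
    (hab : a ≤ b) (hCm : ∀ p ∈ C, p.2 ∈ Icc m M) :
    volume (C + Icc a b ×ˢ {0}) ≤ volume C + ENNReal.ofReal ((b - a) * (M - m)) := by
  have hswap (X : Set (ℝ × ℝ)) : volume (Prod.swap ⁻¹' X) = volume X := by
    rw [Measure.volume_eq_prod]
    exact Measure.measurePreserving_swap.measure_preimage_equiv (f := MeasurableEquiv.prodComm) X
  have hsum : Prod.swap ⁻¹' (C + Icc a b ×ˢ {0}) = Prod.swap ⁻¹' C + {0} ×ˢ Icc a b := by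
    ext ⟨x, y⟩
    simp [mem_add]
  rw [← hswap, hsum, ← hswap C]
  exact (hC.is_linear_preimage (LinearEquiv.prodComm ℝ ℝ ℝ).isLinear).volume_add_zero_prod_Icc_le
    ((Homeomorph.prodComm ℝ ℝ).isCompact_preimage.2 hK) hab fun p hp ↦ hCm _ hp

lemma Convex.volume_add_Icc_prod_Icc_le (hC : Convex ℝ C) (hK : IsCompact C)
    {l L m M c d : ℝ} (hab : a ≤ b) (hcd : c ≤ d) (hCsub : C ⊆ Icc l L ×ˢ Icc m M) :
    volume (C + Icc a b ×ˢ Icc c d) ≤ volume C + ENNReal.ofReal ((b - a) * (M - m)) +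
      ENNReal.ofReal ((d - c) * (L + b - (l + a))) := by
  have hbox : Icc a b ×ˢ Icc c d = Icc a b ×ˢ ({0} : Set ℝ) + {0} ×ˢ Icc c d := by
    rw [prod_add_prod_comm]; simp
  have hfst : ∀ p ∈ C + Icc a b ×ˢ {0}, p.1 ∈ Icc (l + a) (L + b) := by
    rintro _ ⟨p, hp, q, ⟨hq, -⟩, rfl⟩
    exact ⟨add_le_add (hCsub hp).1.1 hq.1, add_le_add (hCsub hp).1.2 hq.2⟩
  calc volume (C + Icc a b ×ˢ Icc c d)
      = volume (C + Icc a b ×ˢ {0} + {0} ×ˢ Icc c d) := by rw [add_assoc, ← hbox]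
    _ ≤ volume (C + Icc a b ×ˢ {0}) + ENNReal.ofReal ((d - c) * (L + b - (l + a))) :=
        (hC.add ((convex_Icc a b).prod (convex_singleton 0))).volume_add_zero_prod_Icc_le
          (hK.add (isCompact_Icc.prod isCompact_singleton)) hcd hfst
    _ ≤ _ := by
        gcongr
        exact hC.volume_add_Icc_prod_zero_le hK hab fun p hp ↦ (hCsub hp).2

end Plane

lemma Convex.volume_toReal_le_of_subset_add_square {K C : Set (ℝ × ℝ)} (hK : Convex ℝ K)
    (hKc : IsCompact K) {U δ c : ℝ} (hU : 0 ≤ U) (hδ : 0 ≤ δ)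
    (hKU : K ⊆ Icc 0 U ×ˢ Icc 0 U) (hC : C ⊆ K + Icc c (c + δ) ×ˢ Icc c (c + δ)) :
    (volume C).toReal ≤ (volume K).toReal + δ * (2 * U + δ) := by
  have hK_fin : volume K ≠ ⊤ := hKc.measure_lt_top.ne
  have hvol := (measure_mono hC).trans (hK.volume_add_Icc_prod_Icc_le hKc
    (le_add_of_nonneg_right hδ) (le_add_of_nonneg_right hδ) hKU)
  rw [show (c + δ - c) * (U - 0) = δ * U by ring,
    show (c + δ - c) * (U + (c + δ) - (0 + c)) = δ * (U + δ) by ring] at hvol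
  calc (volume C).toReal
      ≤ (volume K + ENNReal.ofReal (δ * U) + ENNReal.ofReal (δ * (U + δ))).toReal :=
        ENNReal.toReal_mono (by finiteness) hvol
    _ = (volume K).toReal + δ * (2 * U + δ) := by
        rw [ENNReal.toReal_add (by finiteness) ENNReal.ofReal_ne_top,
          ENNReal.toReal_add hK_fin ENNReal.ofReal_ne_top, ENNReal.toReal_ofReal (by positivity),
          ENNReal.toReal_ofReal (by positivity)]
        ring

noncomputable def snapDown (δ x : ℝ) : ℝ := δ * ⌊x / δ⌋

lemma sub_snapDown_mem_Ico {δ : ℝ} (hδ : 0 < δ) (x : ℝ) : x - snapDown δ x ∈ Ico 0 δ := by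
  rw [snapDown, mul_comm]
  exact ⟨Int.sub_floor_div_mul_nonneg x hδ, Int.sub_floor_div_mul_lt x hδ⟩

lemma snapDown_mem_Icc {δ x U : ℝ} (hδ : 0 < δ) (hx : x ∈ Icc 0 U) : snapDown δ x ∈ Icc 0 U :=
  ⟨mul_nonneg hδ.le (Int.cast_nonneg (Int.floor_nonneg.2 (div_nonneg hx.1 hδ.le))),
    by linarith [(sub_snapDown_mem_Ico hδ x).1, hx.2]⟩

lemma convexHull_subset_convexHull_add {𝕜 E : Type*} [Field 𝕜] [LinearOrder 𝕜]
    [IsStrictOrderedRing 𝕜] [AddCommGroup E] [Module 𝕜 E] {s t D : Set E} (hD : Convex 𝕜 D)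
    (h : s ⊆ t + D) : convexHull 𝕜 s ⊆ convexHull 𝕜 t + D :=
  (convexHull_mono h).trans_eq (by rw [convexHull_add, hD.convexHull_eq])

theorem abs_volume_convexHull_sub_volume_convexHull_snapDown_le {U δ : ℝ} (hU : 0 ≤ U)
    (hδ : 0 < δ) {T : Set (ℝ × ℝ)} (hT : T.Finite) (hTU : T ⊆ Icc 0 U ×ˢ Icc 0 U) :
    |(volume (convexHull ℝ T)).toReal -
      (volume (convexHull ℝ (Prod.map (snapDown δ) (snapDown δ) '' T))).toReal| ≤
        δ * (2 * U + δ) := by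
  set snap := Prod.map (snapDown δ) (snapDown δ)
  have hsquare : Convex ℝ (Icc (0 : ℝ) U ×ˢ Icc (0 : ℝ) U) :=
    (convex_Icc 0 U).prod (convex_Icc 0 U)
  have hsnapU : snap '' T ⊆ Icc 0 U ×ˢ Icc 0 U := by
    rintro _ ⟨t, ht, rfl⟩
    exact ⟨snapDown_mem_Icc hδ (hTU ht).1, snapDown_mem_Icc hδ (hTU ht).2⟩
  have hcoord (x : ℝ) :
      x - snapDown δ x ∈ Icc 0 (0 + δ) ∧ snapDown δ x - x ∈ Icc (-δ) (-δ + δ) := by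
    obtain ⟨h₀, h₁⟩ := sub_snapDown_mem_Ico hδ x
    constructor <;> constructor <;> linarith
  have hup : T ⊆ snap '' T + Icc 0 (0 + δ) ×ˢ Icc 0 (0 + δ) := fun t ht ↦
    ⟨snap t, mem_image_of_mem _ ht, t - snap t, ⟨(hcoord t.1).1, (hcoord t.2).1⟩,
      add_sub_cancel _ _⟩
  have hdown : snap '' T ⊆ T + Icc (-δ) (-δ + δ) ×ˢ Icc (-δ) (-δ + δ) := by
    rintro _ ⟨t, ht, rfl⟩
    exact ⟨t, ht, snap t - t, ⟨(hcoord t.1).2, (hcoord t.2).2⟩, add_sub_cancel _ _⟩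
  have hsquareδ (c : ℝ) : Convex ℝ (Icc c (c + δ) ×ˢ Icc c (c + δ)) :=
    (convex_Icc _ _).prod (convex_Icc _ _)
  have h₁ := (convex_convexHull ℝ (snap '' T)).volume_toReal_le_of_subset_add_square
    ((hT.image snap).isCompact_convexHull ℝ) hU hδ.le (convexHull_min hsnapU hsquare)
    (convexHull_subset_convexHull_add (hsquareδ 0) hup)
  have h₂ := (convex_convexHull ℝ T).volume_toReal_le_of_subset_add_square
    (hT.isCompact_convexHull ℝ) hU hδ.le (convexHull_min hTU hsquare)
    (convexHull_subset_convexHull_add (hsquareδ (-δ)) hdown)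
  rw [abs_sub_le_iff]
  constructor <;> linarith

noncomputable def EuclideanSpace.finTwoMeasurableEquiv : EuclideanSpace ℝ (Fin 2) ≃ᵐ ℝ × ℝ :=
  (MeasurableEquiv.toLp 2 (Fin 2 → ℝ)).symm.trans MeasurableEquiv.finTwoArrow

lemma EuclideanSpace.volume_convexHull_image_finTwoMeasurableEquiv
    (A : Set (EuclideanSpace ℝ (Fin 2))) :
    volume (convexHull ℝ (finTwoMeasurableEquiv '' A)) = volume (convexHull ℝ A) := by
  have hlin : IsLinearMap ℝ finTwoMeasurableEquiv := ⟨fun _ _ ↦ rfl, fun _ _ ↦ rfl⟩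
  have hvol : MeasurePreserving finTwoMeasurableEquiv :=
    (volume_preserving_finTwoArrow ℝ).comp (volume_preserving_symm_measurableEquiv_toLp (Fin 2))
  rw [← hlin.image_convexHull, MeasurableEquiv.image_eq_preimage_symm,
    hvol.symm.measure_preimage_equiv]

theorem area_hull_snap_bound_general
    (U δ : ℝ) (hδ : 0 < δ) (hδU : δ ≤ U)
    (S : Finset (EuclideanSpace ℝ (Fin 2)))
    (hS : ∀ p ∈ S, p 0 ∈ Set.Icc (0 : ℝ) U ∧ p 1 ∈ Set.Icc (0 : ℝ) U) :
    |(volume (convexHull ℝ (S : Set (EuclideanSpace ℝ (Fin 2))))).toReal -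
        (volume (convexHull ℝ
          ((fun p : EuclideanSpace ℝ (Fin 2) =>
              (WithLp.toLp 2 ![δ * ⌊p 0 / δ⌋, δ * ⌊p 1 / δ⌋] : EuclideanSpace ℝ (Fin 2))) ''
            (S : Set (EuclideanSpace ℝ (Fin 2)))))).toReal| ≤ 4 * δ * U := by
  open EuclideanSpace in
  have hSU : finTwoMeasurableEquiv '' S ⊆ Icc 0 U ×ˢ Icc 0 U := by
    rintro _ ⟨p, hp, rfl⟩
    exact hS p hp
  have hbound := abs_volume_convexHull_sub_volume_convexHull_snapDown_le (hδ.le.trans hδU) hδ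
    (S.finite_toSet.image _) hSU
  have hsnap : Prod.map (snapDown δ) (snapDown δ) '' (finTwoMeasurableEquiv '' S) =
      finTwoMeasurableEquiv ''
        ((fun p : EuclideanSpace ℝ (Fin 2) ↦ !₂[δ * ⌊p 0 / δ⌋, δ * ⌊p 1 / δ⌋]) '' S) := by
    simp only [image_image]; rfl
  rw [hsnap, volume_convexHull_image_finTwoMeasurableEquiv,
    volume_convexHull_image_finTwoMeasurableEquiv] at hbound
  exact hbound.trans (by nlinarith)

/-- Snapping each coordinate of a finite point set in `[0,U]²` down to a multiple of
`δ` changes the area of the convex hull by at most `4 δ U`. -/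
theorem area_hull_snap_bound
    (U δ : ℝ) (hU : 0 < U) (hδ : 0 < δ) (hδU : δ ≤ U)
    (S : Finset (EuclideanSpace ℝ (Fin 2)))
    (hS : ∀ p ∈ S, p 0 ∈ Set.Icc (0 : ℝ) U ∧ p 1 ∈ Set.Icc (0 : ℝ) U) :
    |(volume (convexHull ℝ (S : Set (EuclideanSpace ℝ (Fin 2))))).toReal -
        (volume (convexHull ℝ
          ((fun p : EuclideanSpace ℝ (Fin 2) =>
              (WithLp.toLp 2 ![δ * ⌊p 0 / δ⌋, δ * ⌊p 1 / δ⌋] : EuclideanSpace ℝ (Fin 2))) ''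
            (S : Set (EuclideanSpace ℝ (Fin 2)))))).toReal| ≤ 4 * δ * U :=
  area_hull_snap_bound_general U δ hδ hδU S hS
end

section
/- Let c > 0 be a real number and n ≥ 1 an integer. For k = 1, …, 2n set v_k = (c·(k² − 1)/(k² + 1), c·2k/(k² + 1)) ∈ ℝ². Define 4n points r_0, r_1, …, r_{4n−1} by r_0 = (0,0), r_j = r_{j−1} + v_j for 1 ≤ j ≤ 2n, and r_j = r_{j−1} − v_{j−2n} for 2n+1 ≤ j ≤ 4n−1. Then: (i) the family (r_j)_{0 ≤ j ≤ 4n−1} is convex independent (the points are in convex position), and (ii) the cyclic consecutive distances are all equal to c, that is, dist(r_{j−1}, r_j) = c for 1 ≤ j ≤ 4n−1 and dist(r_{4n−1}, r_0) = c; consequently the perimeter of the resulting convex polygon is 4n·c. -/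
/-!
The edge vectors `v_k = circleParam c k` all have length `c`, and their directions
`π - 2 arctan k` turn strictly clockwise as `k` grows. Vertex `r_j` is the sum of the `v_k` over
an interval `S_j` of `{1, …, 2n}`: an initial segment on the way out, a final segment on the way
back. Choosing a half-integer `s` at the end of `S_j`, the normal of `v_s` (or its negative)
pairs positively with exactly the `v_k`, `k ∈ S_j`, so `r_j` is the unique maximizer of this
functional among all subset sums of the `v_k`, in particular among the vertices; hence no vertex
lies in the convex hull of the others.
-/

open Finset RealInnerProductSpace

theorem Finset.sum_lt_sum_of_pos_of_neg_sdiff {ι M : Type*} [DecidableEq ι] [AddCommGroup M]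
    [LinearOrder M] [IsOrderedAddMonoid M] {f : ι → M} {A B U : Finset ι} (hA : A ⊆ U)
    (hAB : A ≠ B)
    (hpos : ∀ k ∈ B, 0 < f k) (hneg : ∀ k ∈ U \ B, f k < 0) :
    ∑ k ∈ A, f k < ∑ k ∈ B, f k := by
  rcases (A \ B).eq_empty_or_nonempty with hdiff | hdiff
  · have hsub : A ⊆ B := sdiff_eq_empty_iff_subset.1 hdiff
    obtain ⟨i, hiB, hiA⟩ := exists_of_ssubset (hsub.ssubset_of_ne hAB)
    exact sum_lt_sum_of_subset hsub hiB hiA (hpos i hiB) fun j hj _ => (hpos j hj).le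
  · have hout : ∑ k ∈ A \ B, f k < 0 :=
      sum_neg (fun k hk => hneg k (sdiff_subset_sdiff hA le_rfl hk)) hdiff
    have hin : ∑ k ∈ A ∩ B, f k ≤ ∑ k ∈ B, f k :=
      sum_le_sum_of_subset_of_nonneg inter_subset_right fun k hk _ => (hpos k hk).le
    calc ∑ k ∈ A, f k = ∑ k ∈ A ∩ B, f k + ∑ k ∈ A \ B, f k :=
          (sum_inter_add_sum_sdiff A B f).symm
      _ < ∑ k ∈ B, f k + 0 := add_lt_add_of_le_of_lt hin hout
      _ = ∑ k ∈ B, f k := add_zero _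

theorem convexIndependent_of_forall_exists_lt {𝕜 E ι : Type*} [Field 𝕜] [LinearOrder 𝕜]
    [IsStrictOrderedRing 𝕜] [AddCommGroup E] [Module 𝕜 E] {p : ι → E}
    (h : ∀ i, ∃ f : E →ₗ[𝕜] 𝕜, ∀ j ≠ i, f (p j) < f (p i)) : ConvexIndependent 𝕜 p := by
  intro s i hi
  by_contra his
  obtain ⟨f, hf⟩ := h i
  have hsub : p '' s ⊆ {y | f y < f (p i)} := by
    rintro _ ⟨j, hj, rfl⟩
    exact hf j (ne_of_mem_of_not_mem hj his)
  exact lt_irrefl _ (convexHull_min hsub (convex_halfSpace_lt f.isLinear _) hi)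

theorem sum_range_dist_mod_eq {X : Type*} [PseudoMetricSpace X] {m : ℕ} {c : ℝ} {r : ℕ → X}
    (hstep : ∀ j, 1 ≤ j → j ≤ m - 1 → dist (r (j - 1)) (r j) = c)
    (hlast : dist (r (m - 1)) (r 0) = c) :
    ∑ j ∈ range m, dist (r j) (r ((j + 1) % m)) = m * c := by
  have hconst : ∀ j ∈ range m, dist (r j) (r ((j + 1) % m)) = c := by
    intro j hj
    rw [mem_range] at hj
    rcases Nat.lt_or_ge (j + 1) m with hlt | hge
    · simpa [Nat.mod_eq_of_lt hlt] using hstep (j + 1) (by omega) (by omega)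
    · rw [show j + 1 = m by omega, Nat.mod_self, show j = m - 1 by omega, hlast]
  rw [sum_congr rfl hconst, sum_const, card_range, nsmul_eq_mul]

/-- The rational parametrization of the circle of radius `c`: the point at angle
`π - 2 arctan t`. -/
noncomputable def circleParam (c t : ℝ) : EuclideanSpace ℝ (Fin 2) :=
  !₂[c * (t ^ 2 - 1) / (t ^ 2 + 1), c * (2 * t) / (t ^ 2 + 1)]

/-- `circleParam c s` rotated by a right angle, up to the factor `c / (s ^ 2 + 1)`. -/
noncomputable def circleParamNormal (s : ℝ) : EuclideanSpace ℝ (Fin 2) :=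
  !₂[-2 * s, s ^ 2 - 1]

theorem norm_circleParam (c t : ℝ) : ‖circleParam c t‖ = |c| := by
  have ht : t ^ 2 + 1 ≠ 0 := by positivity
  rw [EuclideanSpace.norm_eq, ← Real.sqrt_sq_eq_abs]
  congr 1
  simp only [circleParam, Fin.sum_univ_two, Real.norm_eq_abs, sq_abs, Matrix.cons_val_zero,
    Matrix.cons_val_one]
  field_simp
  ring

theorem inner_circleParamNormal_circleParam (c s t : ℝ) :
    ⟪circleParamNormal s, circleParam c t⟫ = (s - t) * (2 * c * (s * t + 1) / (t ^ 2 + 1)) := by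
  have ht : t ^ 2 + 1 ≠ 0 := by positivity
  simp only [circleParamNormal, circleParam, PiLp.inner_apply, Fin.sum_univ_two,
    RCLike.inner_apply, conj_trivial, Matrix.cons_val_zero, Matrix.cons_val_one]
  field_simp
  ring

theorem inner_circleParamNormal_circleParam_pos {c s t : ℝ} (hc : 0 < c) (hs : 0 ≤ s)
    (ht : 0 ≤ t) (hts : t < s) : 0 < ⟪circleParamNormal s, circleParam c t⟫ := by
  rw [inner_circleParamNormal_circleParam]
  exact mul_pos (by linarith) (by positivity)

theorem inner_circleParamNormal_circleParam_neg {c s t : ℝ} (hc : 0 < c) (hs : 0 ≤ s)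
    (ht : 0 ≤ t) (hst : s < t) : ⟪circleParamNormal s, circleParam c t⟫ < 0 := by
  rw [inner_circleParamNormal_circleParam]
  exact mul_neg_of_neg_of_pos (by linarith) (by positivity)

/-- The indices `k` of the edge vectors summed to reach vertex `j`: `{1, …, j}` on the way out
(`j ≤ 2n`, where the truncated subtraction `j - 2n` is `0`) and `{j - 2n + 1, …, 2n}` on the way
back. -/
def partialEdges (n j : ℕ) : Finset ℕ :=
  Icc (j - 2 * n + 1) (min j (2 * n))

theorem partialEdges_subset (n j : ℕ) : partialEdges n j ⊆ Icc 1 (2 * n) := by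
  intro k
  simp only [partialEdges, mem_Icc]
  omega

theorem partialEdges_injOn (n : ℕ) : Set.InjOn (partialEdges n) (Set.Iic (4 * n - 1)) := by
  intro i hi j hj h
  have hcard := congrArg card h
  have hone := congrArg (1 ∈ ·) h
  simp only [Set.mem_Iic] at hi hj
  simp only [partialEdges, Nat.card_Icc, mem_Icc, eq_iff_iff] at hcard hone
  omega

theorem partialEdges_succ_of_le {n j : ℕ} (h : j + 1 ≤ 2 * n) :
    partialEdges n (j + 1) = insert (j + 1) (partialEdges n j) := by
  ext k
  simp only [partialEdges, mem_Icc, mem_insert]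
  omega

theorem partialEdges_eq_insert_succ {n j : ℕ} (h₁ : 2 * n < j + 1) (h₂ : j + 1 ≤ 4 * n) :
    partialEdges n j = insert (j + 1 - 2 * n) (partialEdges n (j + 1)) := by
  ext k
  simp only [partialEdges, mem_Icc, mem_insert]
  omega

theorem partialEdges_four_mul_sub_one {n : ℕ} (hn : 1 ≤ n) :
    partialEdges n (4 * n - 1) = {2 * n} := by
  ext k
  simp only [partialEdges, mem_Icc, mem_singleton]
  omega

theorem eq_sum_partialEdges {E : Type*} [AddCommGroup E] {n : ℕ} {v r : ℕ → E} (hr0 : r 0 = 0)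
    (hrup : ∀ j, 1 ≤ j → j ≤ 2 * n → r j = r (j - 1) + v j)
    (hrdown : ∀ j, 2 * n + 1 ≤ j → j ≤ 4 * n - 1 → r j = r (j - 1) - v (j - 2 * n)) :
    ∀ j ≤ 4 * n - 1, r j = ∑ k ∈ partialEdges n j, v k := by
  intro j
  induction j with
  | zero => simp [partialEdges, hr0]
  | succ j ih =>
    intro hj
    rcases le_or_gt (j + 1) (2 * n) with hup | hdown
    · have hnotMem : j + 1 ∉ partialEdges n j := by simp [partialEdges]
      rw [hrup _ (by omega) hup, Nat.add_sub_cancel, ih (by omega), partialEdges_succ_of_le hup,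
        sum_insert hnotMem, add_comm]
    · have hnotMem : j + 1 - 2 * n ∉ partialEdges n (j + 1) := by simp [partialEdges]
      rw [hrdown _ hdown hj, Nat.add_sub_cancel, ih (by omega),
        partialEdges_eq_insert_succ hdown (by omega), sum_insert hnotMem, add_sub_cancel_left]

theorem exists_inner_circleParam_pos_of_mem_partialEdges {c : ℝ} (hc : 0 < c) (n x : ℕ) :
    ∃ w, (∀ k ∈ partialEdges n x, 0 < ⟪w, circleParam c k⟫) ∧
      ∀ k ∈ Icc 1 (2 * n) \ partialEdges n x, ⟪w, circleParam c k⟫ < 0 := by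
  rcases le_or_gt x (2 * n) with hx | hx
  · refine ⟨circleParamNormal (x + 1 / 2), fun k hk => ?_, fun k hk => ?_⟩
    · have hkx : (k : ℝ) ≤ x := by
        simp only [partialEdges, mem_Icc] at hk
        exact_mod_cast (by omega : k ≤ x)
      exact inner_circleParamNormal_circleParam_pos hc (by positivity) k.cast_nonneg (by linarith)
    · have hkx : (x : ℝ) + 1 ≤ k := by
        simp only [partialEdges, mem_sdiff, mem_Icc] at hk
        exact_mod_cast (by omega : x + 1 ≤ k)
      exact inner_circleParamNormal_circleParam_neg hc (by positivity) k.cast_nonneg (by linarith)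
  · refine ⟨-circleParamNormal ((x - 2 * n : ℕ) + 1 / 2), fun k hk => ?_, fun k hk => ?_⟩
    · have hkx : ((x - 2 * n : ℕ) : ℝ) + 1 ≤ k := by
        simp only [partialEdges, mem_Icc] at hk
        exact_mod_cast (by omega : x - 2 * n + 1 ≤ k)
      rw [inner_neg_left, neg_pos]
      exact inner_circleParamNormal_circleParam_neg hc (by positivity) k.cast_nonneg (by linarith)
    · have hkx : (k : ℝ) ≤ (x - 2 * n : ℕ) := by
        simp only [partialEdges, mem_sdiff, mem_Icc] at hk
        exact_mod_cast (by omega : k ≤ x - 2 * n)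
      rw [inner_neg_left, neg_lt_zero]
      exact inner_circleParamNormal_circleParam_pos hc (by positivity) k.cast_nonneg (by linarith)

/-- The polygon construction of the perimeter hardness reduction: starting from the
origin and following the vectors `v_1, …, v_{2n}` and then `-v_1, …, -v_{2n-1}`
produces `4n` points in convex position whose cyclic consecutive distances are all
equal to `c`, so the perimeter of the resulting convex polygon is `4 n c`. -/
theorem perimeter_polygon_construction
    (c : ℝ) (hc : 0 < c) (n : ℕ) (hn : 1 ≤ n)
    (v : ℕ → EuclideanSpace ℝ (Fin 2))
    (hv : ∀ k : ℕ, v k =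
      !₂[c * ((k : ℝ) ^ 2 - 1) / ((k : ℝ) ^ 2 + 1),
        c * (2 * (k : ℝ)) / ((k : ℝ) ^ 2 + 1)])
    (r : ℕ → EuclideanSpace ℝ (Fin 2))
    (hr0 : r 0 = 0)
    (hrup : ∀ j : ℕ, 1 ≤ j → j ≤ 2 * n → r j = r (j - 1) + v j)
    (hrdown : ∀ j : ℕ, 2 * n + 1 ≤ j → j ≤ 4 * n - 1 → r j = r (j - 1) - v (j - 2 * n)) :
    ConvexIndependent ℝ (fun j : Fin (4 * n) => r j) ∧
      (∀ j : ℕ, 1 ≤ j → j ≤ 4 * n - 1 → dist (r (j - 1)) (r j) = c) ∧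
      dist (r (4 * n - 1)) (r 0) = c ∧
      ∑ j ∈ Finset.range (4 * n), dist (r j) (r ((j + 1) % (4 * n))) = 4 * n * c := by
  obtain rfl : v = fun k : ℕ => circleParam c k := funext hv
  have hnorm (k : ℕ) : ‖circleParam c k‖ = c := by rw [norm_circleParam, abs_of_pos hc]
  have hvertex := eq_sum_partialEdges hr0 hrup hrdown
  have hstep : ∀ j, 1 ≤ j → j ≤ 4 * n - 1 → dist (r (j - 1)) (r j) = c := by
    intro j h₁ h₂
    rcases le_or_gt j (2 * n) with hup | hdown
    · rw [hrup j h₁ hup, dist_self_add_right, hnorm]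
    · rw [hrdown j hdown h₂, dist_self_sub_right, hnorm]
  have hlast : dist (r (4 * n - 1)) (r 0) = c := by
    rw [hvertex _ le_rfl, partialEdges_four_mul_sub_one hn, sum_singleton, hr0, dist_zero_right,
      hnorm]
  refine ⟨convexIndependent_of_forall_exists_lt fun x => ?_, hstep, hlast, ?_⟩
  · obtain ⟨w, hpos, hneg⟩ := exists_inner_circleParam_pos_of_mem_partialEdges hc n x
    have hle (i : Fin (4 * n)) : (i : ℕ) ≤ 4 * n - 1 := by omega
    refine ⟨innerₗ _ w, fun i hix => ?_⟩
    simp only [innerₗ_apply_apply, hvertex i (hle i), hvertex x (hle x), inner_sum]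
    exact sum_lt_sum_of_pos_of_neg_sdiff (partialEdges_subset n i)
      (fun h => hix (Fin.ext (partialEdges_injOn n (hle i) (hle x) h))) hpos hneg
  · rw [sum_range_dist_mod_eq hstep hlast]
    push_cast
    ring
end
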